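/- arXiv:1804.09485 — 2 statements merged into one kernel-verified Lean document; each statement's English description precedes it below -/
import Mathlib

section
/- For any odd prime p, the double sum over i and j from 0 to p-1 of (3i+3j+1)*S(i,j) is congruent to -7*(p/3) modulo p. -/
open Finset

/-- The super Catalan numbers `S(m,n) = C(2m,m)·C(2n,n)/C(m+n,m)` (the division is exact). -/
def superCatalan (m n : ℕ) : ℕ :=
  (Nat.choose (2 * m) m * Nat.choose (2 * n) n) / Nat.choose (m + n) m

/-!
The recurrences `(m + n + 1) S(m, n + 1) = 2 (2n + 1) S(m, n)` and its mirror image in `m` give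
`2 (3m + 3n + 1) S(m, n) = ΔₘF + ΔₙG` with `F(m, n) = (6m - 6n - 11) S(m, n)` and
`G(m, n) = (12m + 1) S(m, n)`, so twice the double sum collapses to its boundary terms.
Modulo `p`, Lucas' theorem gives `S(p, j) ≡ 2 C(2j, j)` for `j < p`, and the boundary becomes
`∑_{k<p} (6k - 10) C(2k, k)`. Since `∑_{k<n} (3k + 2) C(2k, k) = n C(2n, n)`, this is
`-14 ∑_{k<p} C(2k, k)`, and `C(2k, k) ≡ (-4)^k C((p-1)/2, k)` turns the last sum into
`(-3)^((p-1)/2) ≡ (p/3)` by the binomial theorem and quadratic reciprocity.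
-/

open Nat

theorem cast_choose_mul_succ_eq (m n : ℕ) :
    ((m + n).choose m : ℤ) * (m + n + 1) = (m + n + 1).choose m * (n + 1) := by
  have h := choose_mul_succ_eq (m + n) m
  rw [show m + n + 1 - m = n + 1 by omega] at h
  exact_mod_cast h

theorem cast_succ_mul_centralBinom_succ {R : Type*} [CommSemiring R] (n : ℕ) :
    ((n : R) + 1) * centralBinom (n + 1) = 2 * (2 * n + 1) * centralBinom n := by
  exact_mod_cast congrArg (Nat.cast : ℕ → R) (succ_mul_centralBinom_succ n)

/-- The quotient satisfies `S(m, n + 1) = 4 S(m, n) - S(m + 1, n)`, which gives integrality by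
induction on `n`. -/
theorem choose_add_dvd_centralBinom_mul_centralBinom (m n : ℕ) :
    (m + n).choose m ∣ centralBinom m * centralBinom n := by
  suffices h : ∀ n m : ℕ, ((m + n).choose m : ℤ) ∣ centralBinom m * centralBinom n by
    exact_mod_cast h n m
  intro n
  induction n with
  | zero => simp
  | succ n ih =>
    intro m
    obtain ⟨a, ha⟩ := ih m
    obtain ⟨b, hb⟩ := ih (m + 1)
    rw [add_right_comm] at hb
    rw [← add_assoc]
    refine ⟨4 * a - b, ?_⟩
    have e2 : ((m + n + 1).choose (m + 1) : ℤ) * (m + 1) = (m + n + 1).choose m * (n + 1) := by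
      have h := choose_succ_right_eq (m + n + 1) m
      rw [show m + n + 1 - m = n + 1 by omega] at h
      exact_mod_cast h
    have hpos : ((m : ℤ) + 1) * (n + 1) ≠ 0 := by positivity
    refine mul_left_cancel₀ hpos ?_
    linear_combination 4 * (m + 1) * a * cast_choose_mul_succ_eq m n
      + 4 * (m + 1) * (m + n + 1) * ha - (m + 1) * b * e2 - (m + 1) ^ 2 * hb
      + (m + 1) * centralBinom n * cast_succ_mul_centralBinom_succ (R := ℤ) m
      + (m + 1) * centralBinom m * cast_succ_mul_centralBinom_succ (R := ℤ) n

theorem choose_mul_superCatalan (m n : ℕ) :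
    (m + n).choose m * superCatalan m n = centralBinom m * centralBinom n := by
  rw [superCatalan, ← centralBinom_eq_two_mul_choose, ← centralBinom_eq_two_mul_choose]
  exact Nat.mul_div_cancel' (choose_add_dvd_centralBinom_mul_centralBinom m n)

theorem superCatalan_comm (m n : ℕ) : superCatalan m n = superCatalan n m := by
  rw [superCatalan, superCatalan, mul_comm, choose_symm_add, add_comm]

@[simp]
theorem superCatalan_zero_left (n : ℕ) : superCatalan 0 n = centralBinom n := by
  simp [superCatalan, centralBinom_eq_two_mul_choose]

@[simp]
theorem superCatalan_zero_right (m : ℕ) : superCatalan m 0 = centralBinom m := by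
  rw [superCatalan_comm, superCatalan_zero_left]

theorem add_succ_mul_superCatalan_succ_right (m n : ℕ) :
    (m + n + 1) * superCatalan m (n + 1) = 2 * (2 * n + 1) * superCatalan m n := by
  suffices h : ((m : ℤ) + n + 1) * superCatalan m (n + 1)
      = 2 * (2 * n + 1) * superCatalan m n by
    exact_mod_cast h
  have hS : ((m + n).choose m : ℤ) * superCatalan m n = centralBinom m * centralBinom n := by
    exact_mod_cast choose_mul_superCatalan m n
  have hS' : ((m + n + 1).choose m : ℤ) * superCatalan m (n + 1)
      = centralBinom m * centralBinom (n + 1) := by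
    exact_mod_cast choose_mul_superCatalan m (n + 1)
  have hpos : ((m + n + 1).choose m : ℤ) * (n + 1) ≠ 0 := by
    have := choose_pos (show m ≤ m + n + 1 by omega)
    positivity
  refine mul_left_cancel₀ hpos ?_
  linear_combination (m + n + 1) * (n + 1) * hS'
    + 2 * (2 * n + 1) * superCatalan m n * cast_choose_mul_succ_eq m n
    - 2 * (2 * n + 1) * (m + n + 1) * hS
    + (m + n + 1) * centralBinom m * cast_succ_mul_centralBinom_succ (R := ℤ) n

theorem add_succ_mul_superCatalan_succ_left (m n : ℕ) :
    (m + n + 1) * superCatalan (m + 1) n = 2 * (2 * m + 1) * superCatalan m n := by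
  rw [superCatalan_comm, add_comm m, add_succ_mul_superCatalan_succ_right, superCatalan_comm]

theorem superCatalan_telescope_int (m n : ℕ) :
    2 * (3 * (m : ℤ) + 3 * n + 1) * superCatalan m n =
      ((6 * ((m + 1 : ℕ) : ℤ) - 6 * n - 11) * superCatalan (m + 1) n
          - (6 * (m : ℤ) - 6 * n - 11) * superCatalan m n)
        + ((12 * (m : ℤ) + 1) * superCatalan m (n + 1)
          - (12 * (m : ℤ) + 1) * superCatalan m n) := by
  have hl : ((m : ℤ) + n + 1) * superCatalan (m + 1) n = 2 * (2 * m + 1) * superCatalan m n := by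
    exact_mod_cast add_succ_mul_superCatalan_succ_left m n
  have hr : ((m : ℤ) + n + 1) * superCatalan m (n + 1) = 2 * (2 * n + 1) * superCatalan m n := by
    exact_mod_cast add_succ_mul_superCatalan_succ_right m n
  have hpos : ((m : ℤ) + n + 1) ≠ 0 := by positivity
  refine mul_left_cancel₀ hpos ?_
  push_cast
  linear_combination -(6 * ((m : ℤ) + 1) - 6 * n - 11) * hl - (12 * (m : ℤ) + 1) * hr

theorem superCatalan_telescope {R : Type*} [CommRing R] (m n : ℕ) :
    2 * (3 * (m : R) + 3 * n + 1) * superCatalan m n =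
      ((6 * ((m + 1 : ℕ) : R) - 6 * n - 11) * superCatalan (m + 1) n
          - (6 * (m : R) - 6 * n - 11) * superCatalan m n)
        + ((12 * (m : R) + 1) * superCatalan m (n + 1)
          - (12 * (m : R) + 1) * superCatalan m n) := by
  exact_mod_cast congrArg (Int.cast : ℤ → R) (superCatalan_telescope_int m n)

theorem Finset.sum_range_sum_range_sub_add_sub {M : Type*} [AddCommGroup M]
    (F G : ℕ → ℕ → M) (m n : ℕ) :
    ∑ i ∈ range m, ∑ j ∈ range n, ((F (i + 1) j - F i j) + (G i (j + 1) - G i j)) =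
      ∑ j ∈ range n, (F m j - F 0 j) + ∑ i ∈ range m, (G i n - G i 0) := by
  simp only [sum_add_distrib, sum_range_sub]
  rw [sum_comm]
  congr 1
  exact sum_congr rfl fun j _ => sum_range_sub (F · j) m

section ModP

variable {p : ℕ} [Fact p.Prime]

theorem cast_centralBinom_prime : (centralBinom p : ZMod p) = 2 := by
  have h : centralBinom p ≡ choose 2 1 [MOD p] := by
    simpa [centralBinom_eq_two_mul_choose, mul_comm] using
      Choose.choose_mul_mul_modEq_choose_nat (p := p) (a := 2) (b := 1)
  simpa using (ZMod.natCast_eq_natCast_iff _ _ _).mpr h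

theorem cast_choose_prime_add {j : ℕ} (hj : j < p) : ((p + j).choose p : ZMod p) = 1 := by
  have hp : 0 < p := (Fact.out : p.Prime).pos
  have h := Choose.choose_modEq_choose_mod_mul_choose_div_nat (n := p + j) (k := p) (p := p)
  rw [Nat.add_mod_left, Nat.mod_eq_of_lt hj, Nat.mod_self, Nat.add_div_left _ hp,
    Nat.div_eq_of_lt hj, Nat.div_self hp] at h
  simpa using (ZMod.natCast_eq_natCast_iff _ _ _).mpr h

theorem cast_superCatalan_prime_left {j : ℕ} (hj : j < p) :
    (superCatalan p j : ZMod p) = 2 * centralBinom j := by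
  have h := congrArg (Nat.cast : ℕ → ZMod p) (choose_mul_superCatalan p j)
  push_cast at h
  rwa [cast_choose_prime_add hj, one_mul, cast_centralBinom_prime] at h

theorem cast_superCatalan_prime_right {i : ℕ} (hi : i < p) :
    (superCatalan i p : ZMod p) = 2 * centralBinom i := by
  rw [superCatalan_comm, cast_superCatalan_prime_left hi]

end ModP

theorem sum_range_three_mul_add_two_mul_centralBinom (n : ℕ) :
    ∑ k ∈ range n, (3 * k + 2) * centralBinom k = n * centralBinom n := by
  induction n with
  | zero => simp
  | succ n ih =>
    rw [sum_range_succ, ih, succ_mul_centralBinom_succ]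
    ring

section OddPrime

variable {p : ℕ} [Fact p.Prime]

theorem cast_centralBinom_eq_zero {k : ℕ} (hk : p / 2 < k) (hkp : k < p) :
    (centralBinom k : ZMod p) = 0 := by
  rw [centralBinom_eq_two_mul_choose, ZMod.natCast_eq_zero_iff, two_mul]
  exact (Fact.out : p.Prime).dvd_choose_add hkp hkp (by omega)

theorem cast_centralBinom_eq_neg_four_pow_mul_choose (hp : Odd p) {k : ℕ} (hk : k ≤ p / 2) :
    (centralBinom k : ZMod p) = (-4) ^ k * (p / 2).choose k := by
  induction k with
  | zero => simp
  | succ k ih =>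
    have hhalf : 2 * ((p / 2 : ℕ) : ZMod p) + 1 = 0 := by
      have h := congrArg (Nat.cast : ℕ → ZMod p) (Nat.two_mul_div_two_add_one_of_odd hp)
      push_cast at h
      rwa [ZMod.natCast_self] at h
    have hchoose : ((p / 2).choose (k + 1) : ZMod p) * (k + 1)
        = (p / 2).choose k * ((p / 2 : ℕ) - k) := by
      rw [← Nat.cast_sub (by omega)]
      exact_mod_cast congrArg (Nat.cast : ℕ → ZMod p) (choose_succ_right_eq (p / 2) k)
    have hne : ((k : ZMod p) + 1) ≠ 0 := by
      rw [← Nat.cast_succ, Ne, ZMod.natCast_eq_zero_iff]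
      exact Nat.not_dvd_of_pos_of_lt k.succ_pos (by omega)
    refine mul_left_cancel₀ hne ?_
    rw [cast_succ_mul_centralBinom_succ, ih (by omega)]
    linear_combination -(-4) ^ (k + 1) * hchoose
      + 2 * (-4) ^ k * ((p / 2).choose k : ZMod p) * hhalf

theorem sum_range_cast_centralBinom (hp : Odd p) :
    ∑ k ∈ range p, (centralBinom k : ZMod p) = (-3) ^ (p / 2) := by
  have hle : p / 2 + 1 ≤ p := by obtain ⟨r, rfl⟩ := hp; omega
  rw [← sum_range_add_sum_Ico _ hle,
    sum_eq_zero (s := Ico _ p) fun k hk =>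
      cast_centralBinom_eq_zero (mem_Ico.mp hk).1 (mem_Ico.mp hk).2,
    add_zero, show (-3 : ZMod p) = -4 + 1 by norm_num, add_pow]
  refine sum_congr rfl fun k hk => ?_
  rw [cast_centralBinom_eq_neg_four_pow_mul_choose hp (Nat.lt_succ_iff.mp (mem_range.mp hk))]
  simp

theorem cast_legendreSym_three (hp : p ≠ 2) : (legendreSym 3 p : ZMod p) = (-3) ^ (p / 2) := by
  rw [legendreSym.quadratic_reciprocity' hp (by decide)]
  push_cast
  rw [legendreSym.eq_pow, neg_pow (3 : ZMod p)]
  norm_num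

end OddPrime

theorem stmt1 (p : ℕ) (hp : p.Prime) (hodd : Odd p) :
    (↑(∑ i ∈ Finset.range p, ∑ j ∈ Finset.range p, (3 * i + 3 * j + 1) * superCatalan i j) :
        ZMod p) = -7 * (legendreSym 3 p : ZMod p) := by
  have := Fact.mk hp
  have hp2 : p ≠ 2 := by rintro rfl; exact absurd hodd (by decide)
  have h2 : (2 : ZMod p) ≠ 0 := by
    rw [← Nat.cast_two, Ne, ZMod.natCast_eq_zero_iff]
    exact Nat.not_dvd_of_pos_of_lt two_pos (lt_of_le_of_ne hp.two_le hp2.symm)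
  refine mul_left_cancel₀ h2 ?_
  calc _ = ∑ k ∈ range p, (6 * (k : ZMod p) - 10) * centralBinom k := by
        push_cast
        simp_rw [mul_sum, ← mul_assoc, superCatalan_telescope]
        rw [sum_range_sum_range_sub_add_sub
          (fun i j => (6 * (i : ZMod p) - 6 * j - 11) * superCatalan i j)
          (fun i j => (12 * (i : ZMod p) + 1) * superCatalan i j), ← sum_add_distrib]
        refine sum_congr rfl fun k hk => ?_
        rw [cast_superCatalan_prime_left (mem_range.mp hk),
          cast_superCatalan_prime_right (mem_range.mp hk), ZMod.natCast_self]
        simp only [mul_zero, zero_sub, cast_zero, superCatalan_zero_left, superCatalan_zero_right]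
        ring
    _ = 2 * ((∑ k ∈ range p, (3 * k + 2) * centralBinom k : ℕ) : ZMod p)
          - 14 * ∑ k ∈ range p, (centralBinom k : ZMod p) := by
        push_cast
        rw [mul_sum, mul_sum, ← sum_sub_distrib]
        exact sum_congr rfl fun k _ => by ring
    _ = 2 * (-7 * (legendreSym 3 p : ZMod p)) := by
        rw [sum_range_three_mul_add_two_mul_centralBinom, sum_range_cast_centralBinom hodd,
          cast_legendreSym_three hp2]
        push_cast
        rw [ZMod.natCast_self]
        ring
end

section
/- For any odd prime p with n = (p-1)/2, the sum S_2 = sum over i from 0 to n and j from n+1 to 2n of S(i,j) is congruent to (p/3) - (-1)^n modulo p. -/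
/-!
Write `p = 2n + 1`. The recurrence `S(m+1,n) + S(m,n+1) = 4 S(m,n)` shows that `S` is integral,
so `S(i,j) · (i+j)! · i! · j! = (2i)! · (2j)!`. For `n < j < p` the factor `(2j)!` is divisible
by `p`; if also `i + j < p` the other factorials are units, so `S(i,j) ≡ 0`. If `j = p - k` with
`k ≤ i`, then `(i+j)!` and `(2j)!` each contain `p` exactly once; cancelling it and applying
Wilson's theorem in the forms `(p+d)!/p ≡ -d!` and `(p-1-m)! · (-1)^m m! ≡ -1` gives
`S(i, p-k) ≡ 2 (-1)^k (-4)^(i-k) C(n-k, i-k)`, using `C(2i,i) ≡ (-4)^i C(n,i)`.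
The binomial theorem sums this over `i` to `2 (-1)^k (-3)^(n-k)`, a geometric sum over `k` gives
`(-3)^n - (-1)^n`, and `(-3)^n ≡ (-3/p) = (p/3)` by Euler's criterion and quadratic reciprocity.
-/

open Finset

open Nat

noncomputable def superCatalanRat (m n : ℕ) : ℚ :=
  (2 * m).choose m * (2 * n).choose n / (m + n).choose m

theorem superCatalanRat_zero_right (m : ℕ) : superCatalanRat m 0 = (2 * m).choose m := by
  simp [superCatalanRat]

theorem superCatalanRat_succ_left_add_succ_right (m n : ℕ) :
    superCatalanRat (m + 1) n + superCatalanRat m (n + 1) = 4 * superCatalanRat m n := by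
  have hm :
      ((2 * (m + 1)).choose (m + 1) : ℚ) = 2 * (2 * m + 1) * (2 * m).choose m / (m + 1) := by
    rw [eq_div_iff (by positivity), mul_comm]
    exact_mod_cast succ_mul_centralBinom_succ m
  have hn :
      ((2 * (n + 1)).choose (n + 1) : ℚ) = 2 * (2 * n + 1) * (2 * n).choose n / (n + 1) := by
    rw [eq_div_iff (by positivity), mul_comm]
    exact_mod_cast succ_mul_centralBinom_succ n
  have hl : ((m + 1 + n).choose (m + 1) : ℚ) = (m + n + 1) * (m + n).choose m / (m + 1) := by
    rw [eq_div_iff (by positivity), show m + 1 + n = m + n + 1 by ring]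
    exact_mod_cast (add_one_mul_choose_eq (m + n) m).symm
  have hr : ((m + (n + 1)).choose m : ℚ) = (m + n + 1) * (m + n).choose m / (n + 1) := by
    rw [eq_div_iff (by positivity), show m + (n + 1) = m + n + 1 by ring]
    have := choose_mul_succ_eq (m + n) m
    rw [show m + n + 1 - m = n + 1 by omega] at this
    exact_mod_cast this.symm.trans (mul_comm _ _)
  have c0 : ((m + n).choose m : ℚ) ≠ 0 := by exact_mod_cast (choose_pos (le_add_right m n)).ne'
  simp only [superCatalanRat, hm, hn, hl, hr]
  field_simp
  ring

theorem exists_superCatalanRat_eq_intCast (n : ℕ) :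
    ∀ m, ∃ z : ℤ, superCatalanRat m n = z := by
  induction n with
  | zero => exact fun m => ⟨(2 * m).choose m, by simp [superCatalanRat_zero_right]⟩
  | succ n ih =>
    intro m
    obtain ⟨z₀, h₀⟩ := ih m
    obtain ⟨z₁, h₁⟩ := ih (m + 1)
    refine ⟨4 * z₀ - z₁, ?_⟩
    rw [eq_sub_of_add_eq' (superCatalanRat_succ_left_add_succ_right m n), h₀, h₁]
    push_cast; ring

theorem choose_add_dvd_choose_mul_choose (m n : ℕ) :
    (m + n).choose m ∣ (2 * m).choose m * (2 * n).choose n := by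
  obtain ⟨z, hz⟩ := exists_superCatalanRat_eq_intCast n m
  have c0 : ((m + n).choose m : ℚ) ≠ 0 := by exact_mod_cast (choose_pos (le_add_right m n)).ne'
  rw [superCatalanRat, div_eq_iff c0] at hz
  exact Int.natCast_dvd_natCast.mp ⟨z, by exact_mod_cast hz.trans (mul_comm _ _)⟩

theorem superCatalan_mul_choose (m n : ℕ) :
    superCatalan m n * (m + n).choose m = (2 * m).choose m * (2 * n).choose n :=
  Nat.div_mul_cancel (choose_add_dvd_choose_mul_choose m n)

theorem superCatalan_mul_factorials (i j : ℕ) :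
    superCatalan i j * ((i + j)! * (i ! * j !)) = (2 * i)! * (2 * j)! := by
  rw [two_mul, two_mul, ← add_choose_mul_factorial_mul_factorial i i,
    ← add_choose_mul_factorial_mul_factorial j j, ← add_choose_mul_factorial_mul_factorial i j,
    ← choose_symm_add]
  calc superCatalan i j * ((i + j).choose i * i ! * j ! * (i ! * j !))
      = superCatalan i j * (i + j).choose i * (i ! * i ! * (j ! * j !)) := by ring
    _ = _ := by rw [superCatalan_mul_choose, two_mul, two_mul]; ring

namespace ZMod

variable {p : ℕ} [Fact p.Prime]

theorem natCast_ne_zero_of_pos_of_lt {m : ℕ} (h0 : 0 < m) (h : m < p) : (m : ZMod p) ≠ 0 := by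
  rw [Ne, natCast_eq_zero_iff]
  exact fun hd => (Nat.le_of_dvd h0 hd).not_gt h

theorem two_ne_zero_of_ne_two (hp : p ≠ 2) : (2 : ZMod p) ≠ 0 := by
  have := (Fact.out : p.Prime).two_le
  exact_mod_cast natCast_ne_zero_of_pos_of_lt (p := p) (m := 2) two_pos (by omega)

theorem natCast_factorial_ne_zero {m : ℕ} (h : m < p) : (m ! : ZMod p) ≠ 0 := by
  rw [Ne, natCast_eq_zero_iff, (Fact.out : p.Prime).dvd_factorial]
  omega

theorem natCast_choose_eq_div {a b : ℕ} (hab : b ≤ a) (ha : a < p) :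
    (a.choose b : ZMod p) = a ! / (b ! * (a - b)!) := by
  rw [eq_div_iff (mul_ne_zero (natCast_factorial_ne_zero (by omega))
    (natCast_factorial_ne_zero (by omega))), ← mul_assoc]
  exact_mod_cast congrArg (Nat.cast : ℕ → ZMod p) (choose_mul_factorial_mul_factorial hab)

theorem natCast_factorial_prime_add_div (d : ℕ) : (((p + d)! / p : ℕ) : ZMod p) = -d ! := by
  have hp := (Fact.out : p.Prime).pos
  induction d with
  | zero =>
    rw [add_zero, ← mul_factorial_pred hp.ne', Nat.mul_div_cancel_left _ hp, wilsons_lemma,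
      factorial_zero, Nat.cast_one]
  | succ d ih =>
    rw [← add_assoc, factorial_succ, Nat.mul_div_assoc _ (dvd_factorial hp (le_add_right p d)),
      Nat.cast_mul, ih, factorial_succ]
    push_cast [natCast_self]
    ring

theorem natCast_factorial_pred_sub_mul {m : ℕ} (h : m < p) :
    ((p - 1 - m)! : ZMod p) * ((-1) ^ m * m !) = -1 := by
  rw [← cast_descFactorial (by omega : m ≤ p), ← Nat.cast_mul,
    factorial_mul_descFactorial (by omega), wilsons_lemma]

end ZMod

section ModPrime

open ZMod

variable {p : ℕ} [Fact p.Prime]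

theorem superCatalan_cast_mul_factorials {i j d e : ℕ} (hd : i + j = p + d) (he : 2 * j = p + e) :
    (superCatalan i j : ZMod p) * (d ! * (i ! * j !)) = (2 * i)! * e ! := by
  have hp := (Fact.out : p.Prime).pos
  have key := superCatalan_mul_factorials i j
  rw [hd, he, ← Nat.mul_div_cancel' (dvd_factorial hp (le_add_right p d)),
    ← Nat.mul_div_cancel' (dvd_factorial hp (le_add_right p e))] at key
  have key' : superCatalan i j * ((p + d)! / p * (i ! * j !)) = (2 * i)! * ((p + e)! / p) :=
    Nat.eq_of_mul_eq_mul_left hp (by linarith [key])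
  have := congrArg (Nat.cast : ℕ → ZMod p) key'
  push_cast [natCast_factorial_prime_add_div] at this
  linear_combination -this

theorem superCatalan_cast_eq_zero {i j : ℕ} (hij : i + j < p) (hj : p ≤ 2 * j) :
    (superCatalan i j : ZMod p) = 0 := by
  have key := congrArg (Nat.cast : ℕ → ZMod p) (superCatalan_mul_factorials i j)
  rw [Nat.cast_mul, Nat.cast_mul (2 * i)!, (natCast_eq_zero_iff _ _).mpr
    ((Fact.out : p.Prime).dvd_factorial.mpr hj), mul_zero] at key
  refine (mul_eq_zero.mp key).resolve_right ?_
  push_cast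
  exact mul_ne_zero (natCast_factorial_ne_zero hij)
    (mul_ne_zero (natCast_factorial_ne_zero (by omega)) (natCast_factorial_ne_zero (by omega)))

theorem superCatalan_sub_cast_mul_choose {i k : ℕ} (hk : 0 < k) (hki : k ≤ i) (hi : 2 * i < p) :
    (superCatalan i (p - k) : ZMod p) * (2 * k).choose k =
      2 * (-1) ^ k * (2 * i).choose i * i.choose k := by
  obtain ⟨m, rfl⟩ : ∃ m, k = m + 1 := ⟨k - 1, by omega⟩
  have hS := superCatalan_cast_mul_factorials (p := p) (i := i) (j := p - (m + 1))
    (d := i - (m + 1)) (e := p - 1 - (2 * m + 1)) (by omega) (by omega)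
  have hP1 := natCast_factorial_pred_sub_mul (p := p) (m := m) (by omega)
  have hP2 := natCast_factorial_pred_sub_mul (p := p) (m := 2 * m + 1) (by omega)
  rw [show p - 1 - m = p - (m + 1) by omega] at hP1
  rw [pow_succ, pow_mul, neg_one_sq, one_pow, one_mul] at hP2
  have hm : ((m + 1 : ℕ) : ZMod p) ≠ 0 := natCast_ne_zero_of_pos_of_lt (by omega) (by omega)
  have h2 : (2 : ZMod p) ≠ 0 := two_ne_zero_of_ne_two (by omega)
  have hm! := natCast_factorial_ne_zero (p := p) (m := m) (by omega)
  have h2m! := natCast_factorial_ne_zero (p := p) (m := 2 * m + 1) (by omega)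
  have hi! := natCast_factorial_ne_zero (p := p) (m := i) (by omega)
  have hd! := natCast_factorial_ne_zero (p := p) (m := i - (m + 1)) (by omega)
  rw [eq_div_of_mul_eq (by simp [hm!]) hP1, eq_div_of_mul_eq (by simp [h2m!]) hP2] at hS
  rw [eq_div_of_mul_eq (by simp [hm!, hd!, hi!]) hS]
  rw [natCast_choose_eq_div (by omega) (by omega), natCast_choose_eq_div (by omega) (by omega),
    natCast_choose_eq_div hki (by omega), show 2 * (m + 1) - (m + 1) = m + 1 by omega,
    show 2 * i - i = i by omega, show 2 * (m + 1) = 2 * m + 1 + 1 by omega,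
    factorial_succ (2 * m + 1), factorial_succ m]
  push_cast at hm ⊢
  field_simp
  ring

variable {n : ℕ}

theorem choose_two_mul_self_cast (hpn : p = 2 * n + 1) {i : ℕ} (hi : i ≤ n) :
    ((2 * i).choose i : ZMod p) = (-4) ^ i * n.choose i := by
  induction i with
  | zero => simp
  | succ i ih =>
    have hcentral := congrArg (Nat.cast : ℕ → ZMod p) (succ_mul_centralBinom_succ i)
    have hchoose := congrArg (Nat.cast : ℕ → ZMod p) (choose_succ_right_eq n i)
    have hp0 : ((2 * n + 1 : ℕ) : ZMod p) = 0 := by rw [← hpn, natCast_self]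
    have hi0 : ((i + 1 : ℕ) : ZMod p) ≠ 0 := natCast_ne_zero_of_pos_of_lt (by omega) (by omega)
    simp only [centralBinom_eq_two_mul_choose] at hcentral
    push_cast [Nat.cast_sub (by omega : i ≤ n)] at hcentral hchoose hi0 hp0
    apply mul_left_cancel₀ hi0
    linear_combination hcentral + 4 * (-4) ^ i * hchoose + (2 * (-4) ^ i * n.choose i) * hp0
      + 2 * (2 * i + 1) * ih (by omega)

theorem superCatalan_sub_cast (hpn : p = 2 * n + 1) {i k : ℕ} (hk : 0 < k) (hki : k ≤ i)
    (hin : i ≤ n) :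
    (superCatalan i (p - k) : ZMod p) = 2 * (-1) ^ k * (-4) ^ (i - k) * (n - k).choose (i - k) := by
  have h := superCatalan_sub_cast_mul_choose (p := p) hk hki (by omega)
  rw [choose_two_mul_self_cast hpn (by omega), choose_two_mul_self_cast hpn hin] at h
  have hchoose := congrArg (Nat.cast : ℕ → ZMod p) (Nat.choose_mul (n := n) hki)
  push_cast at hchoose
  have hnk : (n.choose k : ZMod p) ≠ 0 := by
    rw [natCast_choose_eq_div (by omega) (by omega)]
    exact div_ne_zero (natCast_factorial_ne_zero (by omega))
      (mul_ne_zero (natCast_factorial_ne_zero (by omega)) (natCast_factorial_ne_zero (by omega)))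
  have h4 : (-4 : ZMod p) ≠ 0 := by
    have h2 : (2 : ZMod p) ≠ 0 := two_ne_zero_of_ne_two (by omega)
    rw [show (-4 : ZMod p) = -(2 * 2) by norm_num]
    exact neg_ne_zero.mpr (mul_ne_zero h2 h2)
  obtain ⟨t, rfl⟩ : ∃ t, i = k + t := ⟨i - k, by omega⟩
  rw [Nat.add_sub_cancel_left] at hchoose ⊢
  apply mul_right_cancel₀ (mul_ne_zero (pow_ne_zero k h4) hnk)
  linear_combination h + 2 * (-1) ^ k * (-4) ^ (k + t) * hchoose

theorem sum_superCatalan_sub_cast (hpn : p = 2 * n + 1) {k : ℕ} (hk : 0 < k) (hkn : k ≤ n) :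
    ∑ i ∈ range (n + 1), (superCatalan i (p - k) : ZMod p) = 2 * (-1) ^ k * (-3) ^ (n - k) := by
  rw [show n + 1 = k + (n - k + 1) by omega, sum_range_add,
    sum_eq_zero fun i hi => superCatalan_cast_eq_zero (by simp at hi; omega) (by omega), zero_add]
  have hbinom := add_pow (-4 : ZMod p) 1 (n - k)
  simp only [one_pow, mul_one] at hbinom
  calc ∑ t ∈ range (n - k + 1), (superCatalan (k + t) (p - k) : ZMod p)
      = 2 * (-1) ^ k * ∑ t ∈ range (n - k + 1), (-4) ^ t * ((n - k).choose t : ZMod p) := by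
        rw [mul_sum]
        refine sum_congr rfl fun t ht => ?_
        rw [superCatalan_sub_cast hpn hk (le_add_right k t) (by simp at ht; omega),
          Nat.add_sub_cancel_left]
        ring
    _ = 2 * (-1) ^ k * (-3) ^ (n - k) := by rw [← hbinom]; norm_num

theorem sum_sum_superCatalan_cast (hpn : p = 2 * n + 1) :
    ∑ i ∈ range (n + 1), ∑ j ∈ Icc (n + 1) (2 * n), (superCatalan i j : ZMod p) =
      (-3) ^ n - (-1) ^ n := by
  rw [sum_comm, ← Ico_add_one_right_eq_Icc, sum_Ico_eq_sum_range,
    show 2 * n + 1 - (n + 1) = n by omega]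
  calc ∑ m ∈ range n, ∑ i ∈ range (n + 1), (superCatalan i (n + 1 + m) : ZMod p)
      = ∑ m ∈ range n, 2 * (-1) ^ n * 3 ^ m := by
        refine sum_congr rfl fun m hm => ?_
        have hmn : m < n := mem_range.mp hm
        have hsign : (-1 : ZMod p) ^ (n - m) * (-1) ^ m = (-1) ^ n := by
          rw [← pow_add, Nat.sub_add_cancel hmn.le]
        rw [show n + 1 + m = p - (n - m) by omega,
          sum_superCatalan_sub_cast hpn (by omega) (by omega), show n - (n - m) = m by omega,
          neg_pow (3 : ZMod p)]
        linear_combination 2 * 3 ^ m * hsign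
    _ = (-1) ^ n * ((∑ m ∈ range n, (3 : ZMod p) ^ m) * (3 - 1)) := by rw [← mul_sum]; ring
    _ = (-3) ^ n - (-1) ^ n := by rw [geom_sum_mul, neg_pow (3 : ZMod p)]; ring

end ModPrime

theorem legendreSym_three_cast {p : ℕ} [Fact p.Prime] (hp : p ≠ 2) :
    (legendreSym 3 p : ZMod p) = (-3) ^ (p / 2) := by
  rw [legendreSym.quadratic_reciprocity' hp (by norm_num), Int.cast_mul, legendreSym.eq_pow,
    neg_pow 3]
  push_cast
  norm_num

theorem stmt14 (p : ℕ) (hp : p.Prime) (hodd : Odd p) :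
    (↑(∑ i ∈ Finset.range ((p - 1) / 2 + 1),
          ∑ j ∈ Finset.Icc ((p - 1) / 2 + 1) (2 * ((p - 1) / 2)), superCatalan i j) : ZMod p) =
      (legendreSym 3 p : ZMod p) - (-1 : ZMod p) ^ ((p - 1) / 2) := by
  have := Fact.mk hp
  obtain ⟨n, hpn⟩ := hodd
  rw [show (p - 1) / 2 = n by omega, legendreSym_three_cast (by omega), show p / 2 = n by omega]
  push_cast
  exact sum_sum_superCatalan_cast hpn
end
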